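/- Let 𝓐=(A,δ^A,σ^A,τ^A) be a fuzzy automaton over a complete residuated lattice 𝓛 and alphabet X, and let E and G be fuzzy equivalence relations on A with E ≤ G. Then: (A) the fuzzy relation G/E on A/E defined by (G/E)(E_{a₁},E_{a₂})=G(a₁,a₂) is a well-defined fuzzy equivalence relation on A/E, and the factor fuzzy automata (𝓐/E)/(G/E) and 𝓐/G are isomorphic. (B) The fuzzy relation φ:A×(A/E)→L defined by φ(a₁,E_{a₂})=G(a₁,a₂) is a uniform fuzzy relation with E_A^φ = G and E_{A/E}^φ = G/E. If, in addition, E is a forward bisimulation on 𝓐, then: (C) G is a forward bisimulation on 𝓐 if and only if G/E is a forward bisimulation on 𝓐/E; (D) G is the greatest forward bisimulation fuzzy equivalence relation on 𝓐 if and only if G/E is the greatest forward bisimulation fuzzy equivalence relation on 𝓐/E; (E) G is a forward bisimulation on 𝓐 if and only if φ is a forward bisimulation between 𝓐 and 𝓐/E. -/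
import Mathlib


universe u

/-- A complete residuated lattice: a complete lattice with a commutative monoid
structure whose unit is the top element, together with a residuum operation
forming an adjoint pair with the multiplication. -/
class CompleteResiduatedLattice (L : Type*) extends CompleteLattice L, CommMonoid L where
  /-- the residuum operation `→` -/
  res : L → L → L
  /-- the adjunction property -/
  adjunction : ∀ x y z : L, x * y ≤ z ↔ x ≤ res y z
  /-- the multiplicative unit `1` is the greatest element -/
  one_eq_top : (1 : L) = ⊤

namespace FuzzyAutomataBisim

/-- A fuzzy automaton over `L` and alphabet `X`, with state set `A`. -/
structure FuzzyAutomaton (L : Type*) [CompleteResiduatedLattice L] (X A : Type*) where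
  δ : A → X → A → L
  σ : A → L
  τ : A → L

variable {L X A B C : Type*} [CompleteResiduatedLattice L]

/-- biresiduum `x ↔ y = (x → y) ⊓ (y → x)` -/
def bires (x y : L) : L :=
  CompleteResiduatedLattice.res x y ⊓ CompleteResiduatedLattice.res y x

/-- inverse of a fuzzy relation -/
def inv (φ : A → B → L) : B → A → L := fun b a => φ a b

/-- composition of fuzzy relations -/
def rcomp (φ : A → B → L) (ψ : B → C → L) : A → C → L := fun a c => ⨆ b, φ a b * ψ b c

/-- composition of a fuzzy set with a fuzzy relation -/
def scomp (f : A → L) (φ : A → B → L) : B → L := fun b => ⨆ a, f a * φ a b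

/-- composition of a fuzzy relation with a fuzzy set -/
def rscomp (φ : A → B → L) (g : B → L) : A → L := fun a => ⨆ b, φ a b * g b

/-- degree of overlapping of two fuzzy sets -/
def sdot (f g : A → L) : L := ⨆ a, f a * g a

/-- kernel `E_A^φ` of a fuzzy relation -/
def ker (φ : A → B → L) : A → A → L := fun a₁ a₂ => ⨅ b, bires (φ a₁ b) (φ a₂ b)

/-- co-kernel `E_B^φ` of a fuzzy relation -/
def coker (φ : A → B → L) : B → B → L := fun b₁ b₂ => ⨅ a, bires (φ a b₁) (φ a b₂)

/-- `φ` is an `L`-function -/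
def IsLFun (φ : A → B → L) : Prop := ∀ a, ∃ b, φ a b = 1

/-- `φ` is surjective, i.e. `φ⁻¹` is an `L`-function -/
def IsSurj (φ : A → B → L) : Prop := ∀ b, ∃ a, φ a b = 1

/-- `φ` is a partial fuzzy function: `φ ∘ φ⁻¹ ∘ φ ≤ φ` -/
def IsPFF (φ : A → B → L) : Prop := rcomp (rcomp φ (inv φ)) φ ≤ φ

/-- `φ` is a uniform fuzzy relation: a partial fuzzy function that is a
surjective `L`-function -/
def IsUniform (φ : A → B → L) : Prop := IsPFF φ ∧ IsLFun φ ∧ IsSurj φ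

/-- the set of crisp descriptions of `φ` -/
def CR (φ : A → B → L) : Set (A → B) := {ψ | ∀ a, φ a (ψ a) = 1}

/-- `ψ : A → B` is `F`-surjective -/
def SurjMod (F : B → B → L) (ψ : A → B) : Prop := ∀ b, ∃ a, F (ψ a) b = 1

/-- fuzzy equivalence relation -/
structure IsFuzzyEquiv (E : A → A → L) : Prop where
  refl : ∀ a, E a a = 1
  symm : ∀ a b, E a b = E b a
  trans : ∀ a b c, E a b * E b c ≤ E a c

/-- fuzzy equality -/
def IsFuzzyEquality (E : A → A → L) : Prop :=
  IsFuzzyEquiv E ∧ ∀ a b, E a b = 1 → a = b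

/-- the factor set `A/E = {E_a : a ∈ A}` -/
abbrev FactorSet (E : A → A → L) := {f : A → L // ∃ a, E a = f}

/-- the class `E_a` as an element of `A/E` -/
def toClass (E : A → A → L) (a : A) : FactorSet E := ⟨E a, a, rfl⟩

/-- a chosen representative of a class -/
noncomputable def rep {E : A → A → L} (c : FactorSet E) : A := c.2.choose

/-- the fuzzy relation `Ẽ` on `A/E` -/
noncomputable def tildeRel (E : A → A → L) : FactorSet E → FactorSet E → L :=
  fun c c' => E (rep c) (rep c')

open Classical in
/-- a chosen crisp description of `φ` -/
noncomputable def crispDesc [Nonempty B] (φ : A → B → L) : A → B :=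
  fun a => if h : ∃ b, φ a b = 1 then h.choose else Classical.arbitrary B

/-- the induced map `φ̃ : A/E_A^φ → B/E_B^φ`, `φ̃(E_a) = F_{ψ(a)}` -/
noncomputable def tilde [Nonempty B] (φ : A → B → L) :
    FactorSet (ker φ) → FactorSet (coker φ) :=
  fun c => toClass (coker φ) (crispDesc φ (rep c))

/-- the fuzzy transition relation `δ_x` -/
def FuzzyAutomaton.δx (M : FuzzyAutomaton L X A) (x : X) : A → A → L := fun a b => M.δ a x b

open Classical in
/-- transitions extended to words -/
noncomputable def deltaWord (M : FuzzyAutomaton L X A) : List X → A → A → L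
  | [] => fun a b => if a = b then (1 : L) else ⊥
  | x :: u => rcomp (M.δx x) (deltaWord M u)

/-- the fuzzy language recognized by `M` : `L(M)(u) = σ ∘ δ_u ∘ τ` -/
noncomputable def lang (M : FuzzyAutomaton L X A) (u : List X) : L :=
  sdot (scomp M.σ (deltaWord M u)) M.τ

/-- forward simulation -/
def IsForwardSim (MA : FuzzyAutomaton L X A) (MB : FuzzyAutomaton L X B)
    (φ : A → B → L) : Prop :=
  MA.σ ≤ scomp MB.σ (inv φ) ∧
  (∀ x, rcomp (inv φ) (MA.δx x) ≤ rcomp (MB.δx x) (inv φ)) ∧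
  rscomp (inv φ) MA.τ ≤ MB.τ

/-- backward simulation -/
def IsBackwardSim (MA : FuzzyAutomaton L X A) (MB : FuzzyAutomaton L X B)
    (φ : A → B → L) : Prop :=
  scomp MA.σ φ ≤ MB.σ ∧
  (∀ x, rcomp (MA.δx x) φ ≤ rcomp φ (MB.δx x)) ∧
  MA.τ ≤ rscomp φ MB.τ

/-- forward bisimulation -/
def IsForwardBisim (MA : FuzzyAutomaton L X A) (MB : FuzzyAutomaton L X B)
    (φ : A → B → L) : Prop :=
  IsForwardSim MA MB φ ∧ IsForwardSim MB MA (inv φ)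

/-- backward bisimulation -/
def IsBackwardBisim (MA : FuzzyAutomaton L X A) (MB : FuzzyAutomaton L X B)
    (φ : A → B → L) : Prop :=
  IsBackwardSim MA MB φ ∧ IsBackwardSim MB MA (inv φ)

/-- backward-forward bisimulation -/
def IsBFBisim (MA : FuzzyAutomaton L X A) (MB : FuzzyAutomaton L X B)
    (φ : A → B → L) : Prop :=
  IsBackwardSim MA MB φ ∧ IsForwardSim MB MA (inv φ)

/-- forward-backward bisimulation -/
def IsFBBisim (MA : FuzzyAutomaton L X A) (MB : FuzzyAutomaton L X B)
    (φ : A → B → L) : Prop :=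
  IsForwardSim MA MB φ ∧ IsBackwardSim MB MA (inv φ)

/-- isomorphism of fuzzy automata -/
def IsIso (MA : FuzzyAutomaton L X A) (MB : FuzzyAutomaton L X B) (h : A → B) : Prop :=
  Function.Bijective h ∧
  (∀ (a₁ : A) (x : X) (a₂ : A), MA.δ a₁ x a₂ = MB.δ (h a₁) x (h a₂)) ∧
  (∀ a, MA.σ a = MB.σ (h a)) ∧
  (∀ a, MA.τ a = MB.τ (h a))

/-- the factor fuzzy automaton `𝓐/E` -/
noncomputable def factorAut (M : FuzzyAutomaton L X A) (E : A → A → L) :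
    FuzzyAutomaton L X (FactorSet E) where
  δ := fun c x c' => rcomp (rcomp E (M.δx x)) E (rep c) (rep c')
  σ := fun c => scomp M.σ E (rep c)
  τ := fun c => rscomp E M.τ (rep c)

/-- the natural fuzzy relation `φ(a₁, E_{a₂}) = E(a₁,a₂)` between `A` and `A/E` -/
def natRel (E : A → A → L) : A → FactorSet E → L := fun a c => c.1 a

/-- the fuzzy relation `G/E` on `A/E` -/
noncomputable def quotRel (E G : A → A → L) : FactorSet E → FactorSet E → L :=
  fun c c' => G (rep c) (rep c')

/-- the fuzzy relation `φ(a₁, E_{a₂}) = G(a₁,a₂)` between `A` and `A/E` -/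
noncomputable def quotNatRel (E G : A → A → L) : A → FactorSet E → L :=
  fun a c => G a (rep c)

/-- UFB-equivalence of fuzzy automata -/
def UFBEquiv (MA : FuzzyAutomaton L X A) (MB : FuzzyAutomaton L X B) : Prop :=
  ∃ φ : A → B → L, IsUniform φ ∧ IsForwardBisim MA MB φ

section Lemmas

open CompleteResiduatedLattice

variable {L : Type*} [CompleteResiduatedLattice L]

lemma le_one' (x : L) : x ≤ 1 := by
  rw [CompleteResiduatedLattice.one_eq_top]; exact le_top

lemma eq_one_of_one_le {x : L} (h : 1 ≤ x) : x = 1 := le_antisymm (le_one' x) h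

lemma mul_le_mul_left'' (a : L) {b c : L} (h : b ≤ c) : a * b ≤ a * c := by
  have h1 : c * a ≤ a * c := le_of_eq (mul_comm c a)
  have h2 : c ≤ res a (a * c) := (adjunction c a (a * c)).mp h1
  have h4 : b * a ≤ a * c := (adjunction b a (a * c)).mpr (le_trans h h2)
  rwa [mul_comm b a] at h4

lemma mul_le_mul'' {a b c d : L} (h1 : a ≤ b) (h2 : c ≤ d) : a * c ≤ b * d := by
  refine le_trans (mul_le_mul_left'' a h2) ?_
  rw [mul_comm a d, mul_comm b d]
  exact mul_le_mul_left'' d h1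

lemma mul_iSup' {ι : Sort*} (a : L) (f : ι → L) : a * (⨆ i, f i) = ⨆ i, a * f i := by
  apply le_antisymm
  · rw [mul_comm]
    refine (adjunction _ _ _).mpr (iSup_le fun i => (adjunction _ _ _).mp ?_)
    rw [mul_comm]
    exact le_iSup (fun i => a * f i) i
  · exact iSup_le fun i => mul_le_mul_left'' a (le_iSup f i)

lemma iSup_mul' {ι : Sort*} (a : L) (f : ι → L) : (⨆ i, f i) * a = ⨆ i, f i * a := by
  rw [mul_comm, mul_iSup']
  exact iSup_congr fun i => mul_comm a (f i)

lemma sup_mul' (x y z : L) : (x ⊔ y) * z = x * z ⊔ y * z := by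
  apply le_antisymm
  · refine (adjunction _ _ _).mpr (sup_le ((adjunction _ _ _).mp le_sup_left)
      ((adjunction _ _ _).mp le_sup_right))
  · exact sup_le (mul_le_mul'' le_sup_left le_rfl) (mul_le_mul'' le_sup_right le_rfl)

lemma mul_le_left'' (a b : L) : a * b ≤ a := by
  have := mul_le_mul_left'' a (le_one' b)
  rwa [mul_one] at this

lemma res_self' (x : L) : res x x = 1 :=
  eq_one_of_one_le ((adjunction 1 x x).mp (le_of_eq (one_mul x)))

lemma res_one_right' (x : L) : res x 1 = 1 :=
  eq_one_of_one_le ((adjunction 1 x 1).mp (le_one' _))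

lemma res_one_left' (x : L) : res 1 x = x := by
  apply le_antisymm
  · have := (adjunction (res 1 x) 1 x).mpr le_rfl
    rwa [mul_one] at this
  · exact (adjunction x 1 x).mp (le_of_eq (mul_one x))

lemma bires_self' (x : L) : bires x x = 1 := by
  simp [bires, res_self']

lemma bires_one_right' (x : L) : bires x 1 = x := by
  rw [bires, res_one_right', res_one_left', CompleteResiduatedLattice.one_eq_top]
  exact top_inf_eq x

lemma bires_one_left' (x : L) : bires 1 x = x := by
  rw [bires, res_one_right', res_one_left', CompleteResiduatedLattice.one_eq_top]
  exact inf_top_eq x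

variable {A B C D : Type*}

lemma rcomp_mono {P P' : A → B → L} {Q Q' : B → C → L} (h1 : P ≤ P') (h2 : Q ≤ Q') :
    rcomp P Q ≤ rcomp P' Q' := fun a c =>
  iSup_le fun b => le_trans (mul_le_mul'' (h1 a b) (h2 b c))
    (le_iSup (fun b => P' a b * Q' b c) b)

lemma scomp_mono {f f' : A → L} {P P' : A → B → L} (h1 : f ≤ f') (h2 : P ≤ P') :
    scomp f P ≤ scomp f' P' := fun b =>
  iSup_le fun a => le_trans (mul_le_mul'' (h1 a) (h2 a b))
    (le_iSup (fun a => f' a * P' a b) a)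

lemma rscomp_mono {P P' : A → B → L} {g g' : B → L} (h1 : P ≤ P') (h2 : g ≤ g') :
    rscomp P g ≤ rscomp P' g' := fun a =>
  iSup_le fun b => le_trans (mul_le_mul'' (h1 a b) (h2 b))
    (le_iSup (fun b => P' a b * g' b) b)

lemma rcomp_assoc (P : A → B → L) (Q : B → C → L) (R : C → D → L) :
    rcomp (rcomp P Q) R = rcomp P (rcomp Q R) := by
  funext a d
  simp only [rcomp, iSup_mul', mul_iSup', mul_assoc]
  exact iSup_comm

lemma scomp_rcomp (f : A → L) (P : A → B → L) (Q : B → C → L) :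
    scomp (scomp f P) Q = scomp f (rcomp P Q) := by
  funext c
  simp only [scomp, rcomp, iSup_mul', mul_iSup', mul_assoc]
  exact iSup_comm

lemma rscomp_rcomp (P : A → B → L) (Q : B → C → L) (g : C → L) :
    rscomp P (rscomp Q g) = rscomp (rcomp P Q) g := by
  funext a
  simp only [rscomp, rcomp, iSup_mul', mul_iSup', mul_assoc]
  exact (iSup_comm).symm

end Lemmas

section Lemmas2

open CompleteResiduatedLattice

variable {L A : Type*} [CompleteResiduatedLattice L]

lemma IsFuzzyEquiv.ext {K : A → A → L} (hK : IsFuzzyEquiv K) {p q : A} (h : K p q = 1) :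
    K p = K q := by
  funext b
  have hqp : K q p = 1 := (hK.symm p q) ▸ h
  apply le_antisymm
  · have := hK.trans q p b
    rwa [hqp, one_mul] at this
  · have := hK.trans p q b
    rwa [h, one_mul] at this

lemma IsFuzzyEquiv.ext_right {K : A → A → L} (hK : IsFuzzyEquiv K) {p q : A}
    (h : K p = K q) (b : A) : K b p = K b q :=
  (hK.symm b p).trans ((congrFun h b).trans (hK.symm q b))

lemma rep_eq {E : A → A → L} (c : FactorSet E) : E (rep c) = c.1 := c.2.choose_spec

lemma toClass_rep {E : A → A → L} (c : FactorSet E) : toClass E (rep c) = c :=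
  Subtype.ext (rep_eq c)

lemma rep_tc_one {E K : A → A → L} (hE : IsFuzzyEquiv E) (hEK : E ≤ K) (a : A) :
    K (rep (toClass E a)) a = 1 := by
  have h1 : E (rep (toClass E a)) a = 1 :=
    (congrFun (rep_eq (toClass E a)) a).trans (hE.refl a)
  exact eq_one_of_one_le (h1 ▸ hEK (rep (toClass E a)) a)

/-- `K (rep (toClass E a)) = K a` whenever `E ≤ K`. -/
lemma rep_tc_eqL {E K : A → A → L} (hE : IsFuzzyEquiv E) (hK : IsFuzzyEquiv K)
    (hEK : E ≤ K) (a : A) : K (rep (toClass E a)) = K a :=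
  hK.ext (rep_tc_one hE hEK a)

lemma rep_tc_eqR {E K : A → A → L} (hE : IsFuzzyEquiv E) (hK : IsFuzzyEquiv K)
    (hEK : E ≤ K) (a b : A) : K b (rep (toClass E a)) = K b a :=
  hK.ext_right (rep_tc_eqL hE hK hEK a) b

lemma iSup_factor (E : A → A → L) (h : A → L)
    (hh : ∀ a, h (rep (toClass E a)) = h a) :
    (⨆ c : FactorSet E, h (rep c)) = ⨆ a, h a := by
  apply le_antisymm
  · exact iSup_le fun c => le_iSup h (rep c)
  · exact iSup_le fun a =>
      le_trans (le_of_eq (hh a).symm) (le_iSup (fun c : FactorSet E => h (rep c)) (toClass E a))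

lemma rcomp_absorb_right {E G : A → A → L} (hE : IsFuzzyEquiv E) (hG : IsFuzzyEquiv G)
    (hEG : E ≤ G) : rcomp G E = G := by
  funext a c
  apply le_antisymm
  · exact iSup_le fun b => le_trans (mul_le_mul'' le_rfl (hEG b c)) (hG.trans a b c)
  · have := le_iSup (fun b => G a b * E b c) c
    rwa [hE.refl, mul_one] at this

lemma rcomp_absorb_left {E G : A → A → L} (hE : IsFuzzyEquiv E) (hG : IsFuzzyEquiv G)
    (hEG : E ≤ G) : rcomp E G = G := by
  funext a c
  apply le_antisymm
  · exact iSup_le fun b => le_trans (mul_le_mul'' (hEG a b) le_rfl) (hG.trans a b c)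
  · have := le_iSup (fun b => E a b * G b c) a
    rwa [hE.refl, one_mul] at this

lemma le_rcomp_left {B : Type*} {K : A → A → L} (hrefl : ∀ a, K a a = 1) (P : A → B → L) :
    P ≤ rcomp K P := fun a b => by
  have := le_iSup (fun c => K a c * P c b) a
  rwa [hrefl, one_mul] at this

lemma le_rcomp_right {B : Type*} {K : A → A → L} (hrefl : ∀ a, K a a = 1) (P : B → A → L) :
    P ≤ rcomp P K := fun b a => by
  have := le_iSup (fun c => P b c * K c a) a
  rwa [hrefl, mul_one] at this

lemma le_rscomp {K : A → A → L} (hrefl : ∀ a, K a a = 1) (g : A → L) :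
    g ≤ rscomp K g := fun a => by
  have := le_iSup (fun b => K a b * g b) a
  rwa [hrefl, one_mul] at this

lemma inv_eq_self {G : A → A → L} (hG : IsFuzzyEquiv G) : inv G = G :=
  funext fun a => funext fun b => hG.symm b a

lemma bisim_iff {X : Type*} (M : FuzzyAutomaton L X A) {G : A → A → L}
    (hG : IsFuzzyEquiv G) :
    IsForwardBisim M M G ↔
      ((∀ x, rcomp G (M.δx x) ≤ rcomp (M.δx x) G) ∧ rscomp G M.τ ≤ M.τ) := by
  have hinv : inv G = G := inv_eq_self hG
  unfold IsForwardBisim IsForwardSim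
  simp only [hinv]
  constructor
  · rintro ⟨⟨-, h1, h2⟩, -⟩; exact ⟨h1, h2⟩
  · rintro ⟨h1, h2⟩
    have hσ : M.σ ≤ scomp M.σ G := fun a => by
      have := le_iSup (fun b => M.σ b * G b a) a
      rwa [hG.refl, mul_one] at this
    exact ⟨⟨hσ, h1, h2⟩, ⟨hσ, h1, h2⟩⟩

/-- extensionality of `rcomp K P` in the first argument w.r.t. `E`-classes -/
lemma Krcomp_ext {B : Type*} {E K : A → A → L} (hE : IsFuzzyEquiv E) (hK : IsFuzzyEquiv K)
    (hEK : E ≤ K) (P : A → B → L) (a : A) (q : B) :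
    rcomp K P (rep (toClass E a)) q = rcomp K P a q := by
  have h := rep_tc_eqL hE hK hEK a
  simp only [rcomp]
  rw [h]

/-- extensionality of `rcomp P K` in the second argument w.r.t. `E`-classes -/
lemma rcompK_ext {B : Type*} {E K : A → A → L} (hE : IsFuzzyEquiv E) (hK : IsFuzzyEquiv K)
    (hEK : E ≤ K) (P : B → A → L) (p : B) (a : A) :
    rcomp P K p (rep (toClass E a)) = rcomp P K p a := by
  simp only [rcomp]
  exact iSup_congr fun b => by rw [rep_tc_eqR hE hK hEK a b]

lemma rscompK_ext {E K : A → A → L} (hE : IsFuzzyEquiv E) (hK : IsFuzzyEquiv K)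
    (hEK : E ≤ K) (g : A → L) (a : A) :
    rscomp K g (rep (toClass E a)) = rscomp K g a := by
  have h := rep_tc_eqL hE hK hEK a
  simp only [rscomp]
  rw [h]

lemma scompK_ext {E K : A → A → L} (hE : IsFuzzyEquiv E) (hK : IsFuzzyEquiv K)
    (hEK : E ≤ K) (f : A → L) (a : A) :
    scomp f K (rep (toClass E a)) = scomp f K a := by
  simp only [scomp]
  exact iSup_congr fun b => by rw [rep_tc_eqR hE hK hEK a b]

lemma quotRel_tc {E G : A → A → L} (hE : IsFuzzyEquiv E) (hG : IsFuzzyEquiv G)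
    (hEG : E ≤ G) (a₁ a₂ : A) :
    quotRel E G (toClass E a₁) (toClass E a₂) = G a₁ a₂ := by
  show G (rep (toClass E a₁)) (rep (toClass E a₂)) = G a₁ a₂
  rw [rep_tc_eqR hE hG hEG a₂ (rep (toClass E a₁)), congrFun (rep_tc_eqL hE hG hEG a₁) a₂]

lemma quotRel_equiv {E G : A → A → L} (hG : IsFuzzyEquiv G) :
    IsFuzzyEquiv (quotRel E G) where
  refl c := hG.refl _
  symm c c' := hG.symm _ _
  trans c c' c'' := hG.trans _ _ _

end Lemmas2

section Lemmas3

variable {L A X : Type*} [CompleteResiduatedLattice L]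
variable (MA : FuzzyAutomaton L X A) {E G : A → A → L}

lemma CL1 (hE : IsFuzzyEquiv E) (hG : IsFuzzyEquiv G) (hEG : E ≤ G) (x : X)
    (c c' : FactorSet E) :
    rcomp (quotRel E G) ((factorAut MA E).δx x) c c'
      = rcomp (rcomp G (MA.δx x)) E (rep c) (rep c') := by
  have hh : ∀ a, G (rep c) (rep (toClass E a)) *
        rcomp (rcomp E (MA.δx x)) E (rep (toClass E a)) (rep c')
      = G (rep c) a * rcomp (rcomp E (MA.δx x)) E a (rep c') := fun a => by
    rw [rep_tc_eqR hE hG hEG a (rep c), rcomp_assoc, Krcomp_ext hE hE le_rfl]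
  calc rcomp (quotRel E G) ((factorAut MA E).δx x) c c'
      = ⨆ c'' : FactorSet E, G (rep c) (rep c'') *
          rcomp (rcomp E (MA.δx x)) E (rep c'') (rep c') := rfl
    _ = ⨆ a, G (rep c) a * rcomp (rcomp E (MA.δx x)) E a (rep c') :=
        iSup_factor E (fun a => G (rep c) a * rcomp (rcomp E (MA.δx x)) E a (rep c')) hh
    _ = rcomp G (rcomp (rcomp E (MA.δx x)) E) (rep c) (rep c') := rfl
    _ = rcomp (rcomp G (MA.δx x)) E (rep c) (rep c') := by
        rw [← rcomp_assoc, ← rcomp_assoc, rcomp_absorb_right hE hG hEG]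

lemma CL2 (hE : IsFuzzyEquiv E) (hG : IsFuzzyEquiv G) (hEG : E ≤ G) (x : X)
    (c c' : FactorSet E) :
    rcomp ((factorAut MA E).δx x) (quotRel E G) c c'
      = rcomp (rcomp E (MA.δx x)) G (rep c) (rep c') := by
  have hh : ∀ a, rcomp (rcomp E (MA.δx x)) E (rep c) (rep (toClass E a)) *
        G (rep (toClass E a)) (rep c')
      = rcomp (rcomp E (MA.δx x)) E (rep c) a * G a (rep c') := fun a => by
    rw [rcompK_ext hE hE le_rfl, congrFun (rep_tc_eqL hE hG hEG a) (rep c')]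
  calc rcomp ((factorAut MA E).δx x) (quotRel E G) c c'
      = ⨆ c'' : FactorSet E, rcomp (rcomp E (MA.δx x)) E (rep c) (rep c'') *
          G (rep c'') (rep c') := rfl
    _ = ⨆ a, rcomp (rcomp E (MA.δx x)) E (rep c) a * G a (rep c') :=
        iSup_factor E (fun a => rcomp (rcomp E (MA.δx x)) E (rep c) a * G a (rep c')) hh
    _ = rcomp (rcomp (rcomp E (MA.δx x)) E) G (rep c) (rep c') := rfl
    _ = rcomp (rcomp E (MA.δx x)) G (rep c) (rep c') := by
        rw [rcomp_assoc (rcomp E (MA.δx x)) E G, rcomp_absorb_left hE hG hEG]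

lemma CL3 (hE : IsFuzzyEquiv E) (hG : IsFuzzyEquiv G) (hEG : E ≤ G) (c : FactorSet E) :
    rscomp (quotRel E G) ((factorAut MA E).τ) c = rscomp G MA.τ (rep c) := by
  have hh : ∀ a, G (rep c) (rep (toClass E a)) * rscomp E MA.τ (rep (toClass E a))
      = G (rep c) a * rscomp E MA.τ a := fun a => by
    rw [rep_tc_eqR hE hG hEG a (rep c), rscompK_ext hE hE le_rfl]
  calc rscomp (quotRel E G) ((factorAut MA E).τ) c
      = ⨆ c' : FactorSet E, G (rep c) (rep c') * rscomp E MA.τ (rep c') := rfl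
    _ = ⨆ a, G (rep c) a * rscomp E MA.τ a :=
        iSup_factor E (fun a => G (rep c) a * rscomp E MA.τ a) hh
    _ = rscomp G (rscomp E MA.τ) (rep c) := rfl
    _ = rscomp G MA.τ (rep c) := by
        rw [rscomp_rcomp, rcomp_absorb_right hE hG hEG]

lemma CL4 (hE : IsFuzzyEquiv E) (hG : IsFuzzyEquiv G) (hEG : E ≤ G) (c : FactorSet E) :
    scomp ((factorAut MA E).σ) (quotRel E G) c = scomp MA.σ G (rep c) := by
  have hh : ∀ a, scomp MA.σ E (rep (toClass E a)) * G (rep (toClass E a)) (rep c)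
      = scomp MA.σ E a * G a (rep c) := fun a => by
    rw [scompK_ext hE hE le_rfl, congrFun (rep_tc_eqL hE hG hEG a) (rep c)]
  calc scomp ((factorAut MA E).σ) (quotRel E G) c
      = ⨆ c' : FactorSet E, scomp MA.σ E (rep c') * G (rep c') (rep c) := rfl
    _ = ⨆ a, scomp MA.σ E a * G a (rep c) :=
        iSup_factor E (fun a => scomp MA.σ E a * G a (rep c)) hh
    _ = scomp (scomp MA.σ E) G (rep c) := rfl
    _ = scomp MA.σ G (rep c) := by
        rw [scomp_rcomp, rcomp_absorb_left hE hG hEG]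

lemma CL5 (hE : IsFuzzyEquiv E) (hG : IsFuzzyEquiv G) (hEG : E ≤ G) (x : X)
    (d d' : FactorSet E) :
    rcomp (rcomp (quotRel E G) ((factorAut MA E).δx x)) (quotRel E G) d d'
      = rcomp (rcomp G (MA.δx x)) G (rep d) (rep d') := by
  have hh : ∀ a, rcomp (rcomp G (MA.δx x)) E (rep d) (rep (toClass E a)) *
        G (rep (toClass E a)) (rep d')
      = rcomp (rcomp G (MA.δx x)) E (rep d) a * G a (rep d') := fun a => by
    rw [rcompK_ext hE hE le_rfl, congrFun (rep_tc_eqL hE hG hEG a) (rep d')]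
  calc rcomp (rcomp (quotRel E G) ((factorAut MA E).δx x)) (quotRel E G) d d'
      = ⨆ c' : FactorSet E, rcomp (quotRel E G) ((factorAut MA E).δx x) d c' *
          G (rep c') (rep d') := rfl
    _ = ⨆ c' : FactorSet E, rcomp (rcomp G (MA.δx x)) E (rep d) (rep c') *
          G (rep c') (rep d') :=
        iSup_congr fun c' => by rw [CL1 MA hE hG hEG x d c']
    _ = ⨆ a, rcomp (rcomp G (MA.δx x)) E (rep d) a * G a (rep d') :=
        iSup_factor E (fun a => rcomp (rcomp G (MA.δx x)) E (rep d) a * G a (rep d')) hh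
    _ = rcomp (rcomp (rcomp G (MA.δx x)) E) G (rep d) (rep d') := rfl
    _ = rcomp (rcomp G (MA.δx x)) G (rep d) (rep d') := by
        rw [rcomp_assoc (rcomp G (MA.δx x)) E G, rcomp_absorb_left hE hG hEG]

lemma partC (hE : IsFuzzyEquiv E) (hG : IsFuzzyEquiv G) (hEG : E ≤ G)
    (hEb : IsForwardBisim MA MA E) :
    IsForwardBisim MA MA G ↔
      IsForwardBisim (factorAut MA E) (factorAut MA E) (quotRel E G) := by
  obtain ⟨hEδ, hEτ⟩ := (bisim_iff MA hE).mp hEb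
  rw [bisim_iff MA hG, bisim_iff (factorAut MA E) (quotRel_equiv hG)]
  constructor
  · rintro ⟨hδ, hτ⟩
    constructor
    · intro x c c'
      rw [CL1 MA hE hG hEG, CL2 MA hE hG hEG]
      calc rcomp (rcomp G (MA.δx x)) E (rep c) (rep c')
          ≤ rcomp (rcomp (MA.δx x) G) E (rep c) (rep c') :=
            rcomp_mono (hδ x) le_rfl (rep c) (rep c')
        _ = rcomp (MA.δx x) G (rep c) (rep c') := by
            rw [rcomp_assoc, rcomp_absorb_right hE hG hEG]
        _ ≤ rcomp (rcomp E (MA.δx x)) G (rep c) (rep c') :=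
            rcomp_mono (le_rcomp_left hE.refl (MA.δx x)) le_rfl (rep c) (rep c')
    · intro c
      rw [CL3 MA hE hG hEG]
      exact le_trans (hτ (rep c)) (le_rscomp hE.refl MA.τ (rep c))
  · rintro ⟨hδQ, hτQ⟩
    constructor
    · intro x
      have key : ∀ a b, rcomp (rcomp G (MA.δx x)) E a b ≤ rcomp (rcomp E (MA.δx x)) G a b := by
        intro a b
        have h := hδQ x (toClass E a) (toClass E b)
        rw [CL1 MA hE hG hEG, CL2 MA hE hG hEG] at h
        have eL : rcomp (rcomp G (MA.δx x)) E (rep (toClass E a)) (rep (toClass E b))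
            = rcomp (rcomp G (MA.δx x)) E a b := by
          rw [rcompK_ext hE hE le_rfl, rcomp_assoc, Krcomp_ext hE hG hEG]
        have eR : rcomp (rcomp E (MA.δx x)) G (rep (toClass E a)) (rep (toClass E b))
            = rcomp (rcomp E (MA.δx x)) G a b := by
          rw [rcompK_ext hE hG hEG, rcomp_assoc, Krcomp_ext hE hE le_rfl]
        rwa [eL, eR] at h
      intro a b
      calc rcomp G (MA.δx x) a b
          ≤ rcomp (rcomp G (MA.δx x)) E a b := le_rcomp_right hE.refl (rcomp G (MA.δx x)) a b
        _ ≤ rcomp (rcomp E (MA.δx x)) G a b := key a b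
        _ ≤ rcomp (rcomp (MA.δx x) E) G a b := rcomp_mono (hEδ x) le_rfl a b
        _ = rcomp (MA.δx x) G a b := by
            rw [rcomp_assoc, rcomp_absorb_left hE hG hEG]
    · intro a
      have h := hτQ (toClass E a)
      rw [CL3 MA hE hG hEG] at h
      rw [show (factorAut MA E).τ (toClass E a)
            = rscomp E MA.τ (rep (toClass E a)) from rfl,
          rscompK_ext hE hG hEG, rscompK_ext hE hE le_rfl] at h
      exact le_trans h (hEτ a)

end Lemmas3

section Lemmas4

variable {L A X : Type*} [CompleteResiduatedLattice L]

/-- powers of a fuzzy relation: `powT T n = T^(n+1)` -/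
def powT (T : A → A → L) : ℕ → A → A → L
  | 0 => T
  | n+1 => rcomp T (powT T n)

lemma powT_succ' (T : A → A → L) : ∀ n, powT T (n+1) = rcomp (powT T n) T := by
  intro n
  induction n with
  | zero => rfl
  | succ n ih =>
    show rcomp T (powT T (n+1)) = rcomp (powT T (n+1)) T
    conv_lhs => rw [ih]
    rw [← rcomp_assoc]
    rfl

lemma powT_symm {T : A → A → L} (hsymm : ∀ a b, T a b = T b a) :
    ∀ n (a b : A), powT T n a b = powT T n b a := by
  intro n
  induction n with
  | zero => exact hsymm
  | succ n ih =>
    intro a b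
    show rcomp T (powT T n) a b = powT T (n+1) b a
    rw [powT_succ']
    show (⨆ c, T a c * powT T n c b) = ⨆ c, powT T n b c * T c a
    exact iSup_congr fun c => by rw [hsymm a c, ih c b, mul_comm]

lemma le_powT {T : A → A → L} (hrefl : ∀ a, T a a = 1) : ∀ n, T ≤ powT T n := by
  intro n
  induction n with
  | zero => exact le_rfl
  | succ n ih => exact le_trans ih (le_rcomp_left hrefl (powT T n))

lemma powT_comp {T : A → A → L} :
    ∀ m n, rcomp (powT T m) (powT T n) ≤ powT T (m+n+1) := by
  intro m
  induction m with
  | zero => intro n; rw [Nat.zero_add]; exact le_rfl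
  | succ m ih =>
    intro n
    calc rcomp (powT T (m+1)) (powT T n)
        = rcomp T (rcomp (powT T m) (powT T n)) := rcomp_assoc T (powT T m) (powT T n)
      _ ≤ rcomp T (powT T (m+n+1)) := rcomp_mono le_rfl (ih n)
      _ ≤ powT T (m+1+n+1) := by
          have hident : m+1+n+1 = (m+n+1)+1 := by omega
          rw [hident]
          exact le_rfl

lemma powT_delta (M : FuzzyAutomaton L X A) {T : A → A → L}
    (hδ : ∀ x, rcomp T (M.δx x) ≤ rcomp (M.δx x) (rcomp T T)) :
    ∀ n x, rcomp (powT T n) (M.δx x) ≤ rcomp (M.δx x) (powT T (2*n+1)) := by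
  intro n
  induction n with
  | zero =>
    intro x
    have h : 2*0+1 = 1 := by omega
    rw [h]
    exact hδ x
  | succ n ih =>
    intro x
    have harith : 1+(2*n+1)+1 = 2*(n+1)+1 := by omega
    have hcomp := powT_comp (T := T) 1 (2*n+1)
    rw [harith] at hcomp
    calc rcomp (powT T (n+1)) (M.δx x)
        = rcomp T (rcomp (powT T n) (M.δx x)) := rcomp_assoc _ _ _
      _ ≤ rcomp T (rcomp (M.δx x) (powT T (2*n+1))) := rcomp_mono le_rfl (ih x)
      _ = rcomp (rcomp T (M.δx x)) (powT T (2*n+1)) := (rcomp_assoc _ _ _).symm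
      _ ≤ rcomp (rcomp (M.δx x) (rcomp T T)) (powT T (2*n+1)) := rcomp_mono (hδ x) le_rfl
      _ = rcomp (M.δx x) (rcomp (rcomp T T) (powT T (2*n+1))) := rcomp_assoc _ _ _
      _ ≤ rcomp (M.δx x) (powT T (2*(n+1)+1)) := rcomp_mono le_rfl hcomp

lemma powT_tau (M : FuzzyAutomaton L X A) {T : A → A → L}
    (hτ : rscomp T M.τ ≤ M.τ) : ∀ n, rscomp (powT T n) M.τ ≤ M.τ := by
  intro n
  induction n with
  | zero => exact hτ
  | succ n ih =>
    calc rscomp (powT T (n+1)) M.τ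
        = rscomp T (rscomp (powT T n) M.τ) := (rscomp_rcomp _ _ _).symm
      _ ≤ rscomp T M.τ := rscomp_mono le_rfl ih
      _ ≤ M.τ := hτ

lemma closure (M : FuzzyAutomaton L X A) (T : A → A → L)
    (hrefl : ∀ a, T a a = 1) (hsymm : ∀ a b, T a b = T b a)
    (hδ : ∀ x, rcomp T (M.δx x) ≤ rcomp (M.δx x) (rcomp T T))
    (hτ : rscomp T M.τ ≤ M.τ) :
    ∃ S : A → A → L, IsFuzzyEquiv S ∧ IsForwardBisim M M S ∧ T ≤ S := by
  set S : A → A → L := fun a b => ⨆ n, powT T n a b with hS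
  have hTS : T ≤ S := fun a b => le_iSup (fun n => powT T n a b) 0
  have hSrefl : ∀ a, S a a = 1 := fun a =>
    eq_one_of_one_le (by rw [← hrefl a]; exact hTS a a)
  have hSsymm : ∀ a b, S a b = S b a := fun a b =>
    iSup_congr fun n => powT_symm hsymm n a b
  have hStrans : ∀ a b c, S a b * S b c ≤ S a c := by
    intro a b c
    show (⨆ m, powT T m a b) * (⨆ n, powT T n b c) ≤ S a c
    rw [iSup_mul']
    refine iSup_le fun m => ?_
    rw [mul_iSup']
    refine iSup_le fun n => ?_
    calc powT T m a b * powT T n b c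
        ≤ rcomp (powT T m) (powT T n) a c :=
          le_iSup (fun b => powT T m a b * powT T n b c) b
      _ ≤ powT T (m+n+1) a c := powT_comp m n a c
      _ ≤ S a c := le_iSup (fun k => powT T k a c) (m+n+1)
  have hSe : IsFuzzyEquiv S := ⟨hSrefl, hSsymm, hStrans⟩
  refine ⟨S, hSe, ?_, hTS⟩
  rw [bisim_iff M hSe]
  constructor
  · intro x a b
    show (⨆ c, S a c * M.δx x c b) ≤ rcomp (M.δx x) S a b
    refine iSup_le fun c => ?_
    show (⨆ n, powT T n a c) * M.δx x c b ≤ _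
    rw [iSup_mul']
    refine iSup_le fun n => ?_
    calc powT T n a c * M.δx x c b
        ≤ rcomp (powT T n) (M.δx x) a b :=
          le_iSup (fun c => powT T n a c * M.δx x c b) c
      _ ≤ rcomp (M.δx x) (powT T (2*n+1)) a b := powT_delta M hδ n x a b
      _ ≤ rcomp (M.δx x) S a b :=
          rcomp_mono le_rfl (fun p q => le_iSup (fun k => powT T k p q) (2*n+1)) a b
  · intro a
    show (⨆ b, S a b * M.τ b) ≤ M.τ a
    refine iSup_le fun b => ?_
    show (⨆ n, powT T n a b) * M.τ b ≤ _
    rw [iSup_mul']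
    refine iSup_le fun n => ?_
    calc powT T n a b * M.τ b
        ≤ rscomp (powT T n) M.τ a := le_iSup (fun b => powT T n a b * M.τ b) b
      _ ≤ M.τ a := powT_tau M hτ n a

end Lemmas4

section Lemmas5

variable {L A X : Type*} [CompleteResiduatedLattice L]
variable (MA : FuzzyAutomaton L X A) {E : A → A → L}

lemma Rsharp_claims (hE : IsFuzzyEquiv E) (hEb : IsForwardBisim MA MA E)
    {R : FactorSet E → FactorSet E → L} (hR : IsFuzzyEquiv R)
    (hRb : IsForwardBisim (factorAut MA E) (factorAut MA E) R) :
    (∀ x, rcomp (fun a b => R (toClass E a) (toClass E b)) (MA.δx x)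
        ≤ rcomp (MA.δx x) (rcomp E (fun a b => R (toClass E a) (toClass E b)))) ∧
    rscomp (fun a b => R (toClass E a) (toClass E b)) MA.τ ≤ MA.τ := by
  obtain ⟨hEδ, hEτ⟩ := (bisim_iff MA hE).mp hEb
  obtain ⟨hRδ, hRτ⟩ := (bisim_iff (factorAut MA E) hR).mp hRb
  have hδEE : ∀ x, MA.δx x ≤ rcomp (rcomp E (MA.δx x)) E := fun x =>
    le_trans (le_rcomp_right hE.refl (MA.δx x))
      (rcomp_mono (le_rcomp_left hE.refl (MA.δx x)) le_rfl)
  have hNδ : ∀ (x : X) (c b : A),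
      (factorAut MA E).δx x (toClass E c) (toClass E b)
        = rcomp (rcomp E (MA.δx x)) E c b := fun x c b => by
    show rcomp (rcomp E (MA.δx x)) E (rep (toClass E c)) (rep (toClass E b)) = _
    rw [rcompK_ext hE hE le_rfl, rcomp_assoc, Krcomp_ext hE hE le_rfl]
  have hNδ2 : ∀ (x : X) (a : A) (d : FactorSet E),
      (factorAut MA E).δx x (toClass E a) d
        = rcomp (rcomp E (MA.δx x)) E a (rep d) := fun x a d => by
    show rcomp (rcomp E (MA.δx x)) E (rep (toClass E a)) (rep d) = _
    rw [rcomp_assoc, Krcomp_ext hE hE le_rfl]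
  have hNτ : ∀ c : A, (factorAut MA E).τ (toClass E c) = rscomp E MA.τ c := fun c => by
    show rscomp E MA.τ (rep (toClass E c)) = _
    rw [rscompK_ext hE hE le_rfl]
  constructor
  · intro x a b
    have step1 : rcomp (fun a b => R (toClass E a) (toClass E b)) (MA.δx x) a b
        ≤ rcomp R ((factorAut MA E).δx x) (toClass E a) (toClass E b) := by
      refine iSup_le fun c => ?_
      have hsub : MA.δx x c b ≤ (factorAut MA E).δx x (toClass E c) (toClass E b) := by
        rw [hNδ x c b]; exact hδEE x c b
      exact le_trans (mul_le_mul'' le_rfl hsub)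
        (le_iSup (fun d => R (toClass E a) d * (factorAut MA E).δx x d (toClass E b))
          (toClass E c))
    have step2 := hRδ x (toClass E a) (toClass E b)
    have step3 : rcomp ((factorAut MA E).δx x) R (toClass E a) (toClass E b)
        ≤ rcomp (rcomp (rcomp E (MA.δx x)) E)
            (fun a b => R (toClass E a) (toClass E b)) a b := by
      refine iSup_le fun d => ?_
      have h1 : rcomp (rcomp E (MA.δx x)) E a (rep d) *
            R (toClass E (rep d)) (toClass E b)
          ≤ ⨆ c, rcomp (rcomp E (MA.δx x)) E a c * R (toClass E c) (toClass E b) :=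
        le_iSup (fun c => rcomp (rcomp E (MA.δx x)) E a c * R (toClass E c) (toClass E b))
          (rep d)
      rw [toClass_rep d] at h1
      rw [hNδ2 x a d]
      exact h1
    have step4 : rcomp (rcomp (rcomp E (MA.δx x)) E)
          (fun a b => R (toClass E a) (toClass E b)) a b
        ≤ rcomp (MA.δx x)
            (rcomp E (fun a b => R (toClass E a) (toClass E b))) a b := by
      have : rcomp (rcomp (rcomp E (MA.δx x)) E)
            (fun a b => R (toClass E a) (toClass E b))
          ≤ rcomp (MA.δx x) (rcomp E (fun a b => R (toClass E a) (toClass E b))) := by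
        calc rcomp (rcomp (rcomp E (MA.δx x)) E) (fun a b => R (toClass E a) (toClass E b))
            = rcomp (rcomp E (MA.δx x)) (rcomp E (fun a b => R (toClass E a) (toClass E b))) :=
              rcomp_assoc _ _ _
          _ ≤ rcomp (rcomp (MA.δx x) E) (rcomp E (fun a b => R (toClass E a) (toClass E b))) :=
              rcomp_mono (hEδ x) le_rfl
          _ = rcomp (MA.δx x) (rcomp E (rcomp E (fun a b => R (toClass E a) (toClass E b)))) :=
              rcomp_assoc _ _ _
          _ = rcomp (MA.δx x) (rcomp (rcomp E E) (fun a b => R (toClass E a) (toClass E b))) :=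
              by rw [rcomp_assoc]
          _ = rcomp (MA.δx x) (rcomp E (fun a b => R (toClass E a) (toClass E b))) :=
              by rw [rcomp_absorb_right hE hE le_rfl]
      exact this a b
    exact le_trans step1 (le_trans step2 (le_trans step3 step4))
  · intro a
    have step1 : rscomp (fun a b => R (toClass E a) (toClass E b)) MA.τ a
        ≤ rscomp R ((factorAut MA E).τ) (toClass E a) := by
      refine iSup_le fun c => ?_
      have hsub : MA.τ c ≤ (factorAut MA E).τ (toClass E c) := by
        rw [hNτ c]; exact le_rscomp hE.refl MA.τ c
      exact le_trans (mul_le_mul'' le_rfl hsub)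
        (le_iSup (fun d => R (toClass E a) d * (factorAut MA E).τ d) (toClass E c))
    have step2 := hRτ (toClass E a)
    have step3 : (factorAut MA E).τ (toClass E a) ≤ MA.τ a := by
      rw [hNτ a]; exact hEτ a
    exact le_trans step1 (le_trans step2 step3)

end Lemmas5

section Lemmas6

variable {L A X : Type*} [CompleteResiduatedLattice L]
variable (MA : FuzzyAutomaton L X A) {E G : A → A → L}

lemma partE (hE : IsFuzzyEquiv E) (hG : IsFuzzyEquiv G) (hEG : E ≤ G) :
    IsForwardBisim MA MA G ↔ IsForwardBisim MA (factorAut MA E) (quotNatRel E G) := by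
  have hδEE : ∀ x : X, MA.δx x ≤ rcomp (rcomp E (MA.δx x)) E := fun x =>
    le_trans (le_rcomp_right hE.refl (MA.δx x))
      (rcomp_mono (le_rcomp_left hE.refl (MA.δx x)) le_rfl)
  have l2 : ∀ (x : X) (c : FactorSet E) (b : A),
      rcomp (inv (quotNatRel E G)) (MA.δx x) c b = rcomp G (MA.δx x) (rep c) b := by
    intro x c b
    show (⨆ a', G a' (rep c) * MA.δx x a' b) = ⨆ a', G (rep c) a' * MA.δx x a' b
    exact iSup_congr fun a' => by rw [hG.symm a' (rep c)]
  have r2 : ∀ (x : X) (c : FactorSet E) (b : A),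
      rcomp ((factorAut MA E).δx x) (inv (quotNatRel E G)) c b
        = rcomp (rcomp (rcomp E (MA.δx x)) E) G (rep c) b := by
    intro x c b
    have hh : ∀ a', rcomp (rcomp E (MA.δx x)) E (rep c) (rep (toClass E a')) *
          G b (rep (toClass E a'))
        = rcomp (rcomp E (MA.δx x)) E (rep c) a' * G b a' := fun a' => by
      rw [rcompK_ext hE hE le_rfl, rep_tc_eqR hE hG hEG a' b]
    calc rcomp ((factorAut MA E).δx x) (inv (quotNatRel E G)) c b
        = ⨆ c' : FactorSet E,
            rcomp (rcomp E (MA.δx x)) E (rep c) (rep c') * G b (rep c') := rfl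
      _ = ⨆ a', rcomp (rcomp E (MA.δx x)) E (rep c) a' * G b a' :=
          iSup_factor E (fun a' => rcomp (rcomp E (MA.δx x)) E (rep c) a' * G b a') hh
      _ = ⨆ a', rcomp (rcomp E (MA.δx x)) E (rep c) a' * G a' b :=
          iSup_congr fun a' => by rw [hG.symm b a']
      _ = rcomp (rcomp (rcomp E (MA.δx x)) E) G (rep c) b := rfl
  have l3 : ∀ c : FactorSet E,
      rscomp (inv (quotNatRel E G)) MA.τ c = rscomp G MA.τ (rep c) := by
    intro c
    show (⨆ a, G a (rep c) * MA.τ a) = ⨆ a, G (rep c) a * MA.τ a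
    exact iSup_congr fun a => by rw [hG.symm a (rep c)]
  have e5 : ∀ (x : X) (a : A) (c' : FactorSet E),
      rcomp (inv (inv (quotNatRel E G))) ((factorAut MA E).δx x) a c'
        = rcomp (rcomp G (MA.δx x)) E a (rep c') := by
    intro x a c'
    have hh : ∀ b, G a (rep (toClass E b)) *
          rcomp (rcomp E (MA.δx x)) E (rep (toClass E b)) (rep c')
        = G a b * rcomp (rcomp E (MA.δx x)) E b (rep c') := fun b => by
      rw [rep_tc_eqR hE hG hEG b a, rcomp_assoc, Krcomp_ext hE hE le_rfl]
    calc rcomp (inv (inv (quotNatRel E G))) ((factorAut MA E).δx x) a c'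
        = ⨆ c : FactorSet E,
            G a (rep c) * rcomp (rcomp E (MA.δx x)) E (rep c) (rep c') := rfl
      _ = ⨆ b, G a b * rcomp (rcomp E (MA.δx x)) E b (rep c') :=
          iSup_factor E (fun b => G a b * rcomp (rcomp E (MA.δx x)) E b (rep c')) hh
      _ = rcomp G (rcomp (rcomp E (MA.δx x)) E) a (rep c') := rfl
      _ = rcomp (rcomp G (MA.δx x)) E a (rep c') := by
          rw [← rcomp_assoc, ← rcomp_assoc, rcomp_absorb_right hE hG hEG]
  have e6 : ∀ a : A,
      rscomp (inv (inv (quotNatRel E G))) ((factorAut MA E).τ) a = rscomp G MA.τ a := by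
    intro a
    have hh : ∀ b, G a (rep (toClass E b)) * rscomp E MA.τ (rep (toClass E b))
        = G a b * rscomp E MA.τ b := fun b => by
      rw [rep_tc_eqR hE hG hEG b a, rscompK_ext hE hE le_rfl]
    calc rscomp (inv (inv (quotNatRel E G))) ((factorAut MA E).τ) a
        = ⨆ c : FactorSet E, G a (rep c) * rscomp E MA.τ (rep c) := rfl
      _ = ⨆ b, G a b * rscomp E MA.τ b :=
          iSup_factor E (fun b => G a b * rscomp E MA.τ b) hh
      _ = rscomp G (rscomp E MA.τ) a := rfl
      _ = rscomp G MA.τ a := by rw [rscomp_rcomp, rcomp_absorb_right hE hG hEG]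
  constructor
  · intro hGb
    obtain ⟨hGδ, hGτ⟩ := (bisim_iff MA hG).mp hGb
    refine ⟨⟨?_, ?_, ?_⟩, ⟨?_, ?_, ?_⟩⟩
    · intro a
      have h1 : G a (rep (toClass E a)) = 1 := by
        rw [rep_tc_eqR hE hG hEG a a, hG.refl]
      have h2 : MA.σ a ≤ scomp MA.σ E (rep (toClass E a)) := by
        have := le_iSup (fun a' => MA.σ a' * E a' (rep (toClass E a))) a
        rw [rep_tc_eqR hE hE le_rfl a a, hE.refl, mul_one] at this
        exact this
      calc MA.σ a ≤ scomp MA.σ E (rep (toClass E a)) := h2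
        _ = scomp MA.σ E (rep (toClass E a)) * G a (rep (toClass E a)) := by
            rw [h1, mul_one]
        _ ≤ ⨆ c, (factorAut MA E).σ c * inv (quotNatRel E G) c a :=
            le_iSup (fun c => (factorAut MA E).σ c * inv (quotNatRel E G) c a)
              (toClass E a)
    · intro x c b
      rw [l2 x c b, r2 x c b]
      calc rcomp G (MA.δx x) (rep c) b
          ≤ rcomp (MA.δx x) G (rep c) b := hGδ x (rep c) b
        _ ≤ rcomp (rcomp (rcomp E (MA.δx x)) E) G (rep c) b :=
            rcomp_mono (hδEE x) le_rfl (rep c) b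
    · intro c
      rw [l3 c]
      exact le_trans (hGτ (rep c)) (le_rscomp hE.refl MA.τ (rep c))
    · intro c
      show scomp MA.σ E (rep c) ≤ ⨆ a, MA.σ a * G a (rep c)
      exact iSup_le fun a => le_trans (mul_le_mul'' le_rfl (hEG a (rep c)))
        (le_iSup (fun a => MA.σ a * G a (rep c)) a)
    · intro x a c'
      rw [e5 x a c']
      show rcomp (rcomp G (MA.δx x)) E a (rep c') ≤ rcomp (MA.δx x) G a (rep c')
      calc rcomp (rcomp G (MA.δx x)) E a (rep c')
          ≤ rcomp (rcomp (MA.δx x) G) E a (rep c') :=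
            rcomp_mono (hGδ x) le_rfl a (rep c')
        _ = rcomp (MA.δx x) (rcomp G E) a (rep c') := by rw [rcomp_assoc]
        _ = rcomp (MA.δx x) G a (rep c') := by rw [rcomp_absorb_right hE hG hEG]
    · intro a
      rw [e6 a]
      exact hGτ a
  · intro hφb
    obtain ⟨⟨-, -, -⟩, ⟨-, h5, h6⟩⟩ := hφb
    have hGτ : rscomp G MA.τ ≤ MA.τ := fun a => by
      rw [← e6 a]; exact h6 a
    have hGδ : ∀ x, rcomp G (MA.δx x) ≤ rcomp (MA.δx x) G := by
      intro x a b
      have h := h5 x a (toClass E b)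
      rw [e5 x a (toClass E b)] at h
      have hR : rcomp (MA.δx x) (inv (inv (quotNatRel E G))) a (toClass E b)
          = rcomp (MA.δx x) G a b := by
        show rcomp (MA.δx x) G a (rep (toClass E b)) = rcomp (MA.δx x) G a b
        rw [rcompK_ext hE hG hEG]
      rw [hR, rcompK_ext hE hE le_rfl] at h
      exact le_trans (le_rcomp_right hE.refl (rcomp G (MA.δx x)) a b) h
    exact (bisim_iff MA hG).mpr ⟨hGδ, hGτ⟩

end Lemmas6

section Lemmas7

open CompleteResiduatedLattice

variable {L A X : Type*} [CompleteResiduatedLattice L]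
variable (MA : FuzzyAutomaton L X A) {E G : A → A → L}

lemma partB (hE : IsFuzzyEquiv E) (hG : IsFuzzyEquiv G) (hEG : E ≤ G) :
    IsUniform (quotNatRel E G) ∧ ker (quotNatRel E G) = G ∧
      coker (quotNatRel E G) = quotRel E G := by
  refine ⟨⟨?_, ?_, ?_⟩, ?_, ?_⟩
  · -- IsPFF
    intro a c
    show (⨆ a', rcomp (quotNatRel E G) (inv (quotNatRel E G)) a a' * G a' (rep c))
        ≤ G a (rep c)
    refine iSup_le fun a' => ?_
    have h1 : rcomp (quotNatRel E G) (inv (quotNatRel E G)) a a' ≤ G a a' := by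
      show (⨆ c'', G a (rep c'') * G a' (rep c'')) ≤ G a a'
      refine iSup_le fun c'' => ?_
      calc G a (rep c'') * G a' (rep c'')
          = G a (rep c'') * G (rep c'') a' := by rw [hG.symm a' (rep c'')]
        _ ≤ G a a' := hG.trans _ _ _
    exact le_trans (mul_le_mul'' h1 le_rfl) (hG.trans a a' (rep c))
  · -- IsLFun
    intro a
    refine ⟨toClass E a, ?_⟩
    show G a (rep (toClass E a)) = 1
    rw [rep_tc_eqR hE hG hEG a a, hG.refl]
  · -- IsSurj
    intro c
    exact ⟨rep c, hG.refl (rep c)⟩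
  · -- ker = G
    funext a₁ a₂
    apply le_antisymm
    · refine le_trans (iInf_le
        (fun c : FactorSet E => bires (G a₁ (rep c)) (G a₂ (rep c))) (toClass E a₂)) ?_
      rw [rep_tc_eqR hE hG hEG a₂ a₁, rep_tc_eqR hE hG hEG a₂ a₂, hG.refl,
        bires_one_right']
    · show G a₁ a₂ ≤ ⨅ c : FactorSet E, bires (G a₁ (rep c)) (G a₂ (rep c))
      refine le_iInf fun c => le_inf ?_ ?_
      · refine (adjunction _ _ _).mp ?_
        calc G a₁ a₂ * G a₁ (rep c) = G a₂ a₁ * G a₁ (rep c) := by rw [hG.symm a₁ a₂]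
          _ ≤ G a₂ (rep c) := hG.trans _ _ _
      · exact (adjunction _ _ _).mp (hG.trans a₁ a₂ (rep c))
  · -- coker = quotRel
    funext c c'
    show (⨅ a, bires (G a (rep c)) (G a (rep c'))) = G (rep c) (rep c')
    apply le_antisymm
    · refine le_trans (iInf_le (fun a => bires (G a (rep c)) (G a (rep c'))) (rep c)) ?_
      rw [hG.refl, bires_one_left']
    · refine le_iInf fun a => le_inf ?_ ?_
      · refine (adjunction _ _ _).mp ?_
        calc G (rep c) (rep c') * G a (rep c)
            = G a (rep c) * G (rep c) (rep c') := mul_comm _ _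
          _ ≤ G a (rep c') := hG.trans _ _ _
      · refine (adjunction _ _ _).mp ?_
        calc G (rep c) (rep c') * G a (rep c')
            = G a (rep c') * G (rep c') (rep c) := by
              rw [hG.symm (rep c) (rep c'), mul_comm]
          _ ≤ G a (rep c) := hG.trans _ _ _

lemma partA_iso (hE : IsFuzzyEquiv E) (hG : IsFuzzyEquiv G) (hEG : E ≤ G) :
    ∃ θ : FactorSet (quotRel E G) → FactorSet G,
      IsIso (factorAut (factorAut MA E) (quotRel E G)) (factorAut MA G) θ := by
  have hQ : IsFuzzyEquiv (quotRel E G) := quotRel_equiv hG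
  refine ⟨fun d => toClass G (rep (rep d)), ?_, ?_, ?_, ?_⟩
  · rw [Function.bijective_iff_has_inverse]
    refine ⟨fun e => toClass (quotRel E G) (toClass E (rep e)), ?_, ?_⟩
    · intro d
      show toClass (quotRel E G) (toClass E (rep (toClass G (rep (rep d))))) = d
      have ha' : G (rep (toClass G (rep (rep d)))) = G (rep (rep d)) :=
        rep_tc_eqL hG hG le_rfl (rep (rep d))
      have key : G (rep (toClass E (rep (toClass G (rep (rep d)))))) (rep (rep d)) = 1 := by
        rw [congrFun (rep_tc_eqL hE hG hEG (rep (toClass G (rep (rep d))))) (rep (rep d)),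
          congrFun ha' (rep (rep d)), hG.refl]
      have hQext : toClass (quotRel E G) (toClass E (rep (toClass G (rep (rep d)))))
          = toClass (quotRel E G) (rep d) :=
        Subtype.ext (hQ.ext (p := toClass E (rep (toClass G (rep (rep d)))))
          (q := rep d) key)
      rw [hQext, toClass_rep d]
    · intro e
      show toClass G (rep (rep (toClass (quotRel E G) (toClass E (rep e))))) = e
      have h1' : G (rep (rep (toClass (quotRel E G) (toClass E (rep e)))))
          (rep (toClass E (rep e))) = 1 :=
        rep_tc_one hQ le_rfl (toClass E (rep e))
      have h2 : G (rep (toClass E (rep e))) (rep e) = 1 := rep_tc_one hE hEG (rep e)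
      have h3 : G (rep (rep (toClass (quotRel E G) (toClass E (rep e))))) (rep e) = 1 := by
        have := hG.trans (rep (rep (toClass (quotRel E G) (toClass E (rep e)))))
          (rep (toClass E (rep e))) (rep e)
        rw [h1', h2, one_mul] at this
        exact eq_one_of_one_le this
      have h4 : toClass G (rep (rep (toClass (quotRel E G) (toClass E (rep e)))))
          = toClass G (rep e) := Subtype.ext (hG.ext h3)
      rw [h4, toClass_rep e]
  · intro d x d'
    show rcomp (rcomp (quotRel E G) ((factorAut MA E).δx x)) (quotRel E G) (rep d) (rep d')
        = (factorAut MA G).δ (toClass G (rep (rep d))) x (toClass G (rep (rep d')))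
    rw [CL5 MA hE hG hEG x (rep d) (rep d')]
    show rcomp (rcomp G (MA.δx x)) G (rep (rep d)) (rep (rep d'))
        = rcomp (rcomp G (MA.δx x)) G (rep (toClass G (rep (rep d))))
            (rep (toClass G (rep (rep d'))))
    rw [rcompK_ext hG hG le_rfl, rcomp_assoc, Krcomp_ext hG hG le_rfl]
  · intro d
    show scomp ((factorAut MA E).σ) (quotRel E G) (rep d)
        = (factorAut MA G).σ (toClass G (rep (rep d)))
    rw [CL4 MA hE hG hEG (rep d)]
    show scomp MA.σ G (rep (rep d)) = scomp MA.σ G (rep (toClass G (rep (rep d))))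
    rw [scompK_ext hG hG le_rfl]
  · intro d
    show rscomp (quotRel E G) ((factorAut MA E).τ) (rep d)
        = (factorAut MA G).τ (toClass G (rep (rep d)))
    rw [CL3 MA hE hG hEG (rep d)]
    show rscomp G MA.τ (rep (rep d)) = rscomp G MA.τ (rep (toClass G (rep (rep d))))
    rw [rscompK_ext hG hG le_rfl]

end Lemmas7

/-- second isomorphism theorem for fuzzy automata -/
theorem factor_factor {L X A : Type*} [CompleteResiduatedLattice L] [Nonempty A]
    (MA : FuzzyAutomaton L X A) (E G : A → A → L)
    (hE : IsFuzzyEquiv E) (hG : IsFuzzyEquiv G) (hEG : E ≤ G) :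
    ((∀ a₁ a₂ : A, quotRel E G (toClass E a₁) (toClass E a₂) = G a₁ a₂) ∧
     IsFuzzyEquiv (quotRel E G) ∧
     (∃ θ : FactorSet (quotRel E G) → FactorSet G,
        IsIso (factorAut (factorAut MA E) (quotRel E G)) (factorAut MA G) θ)) ∧
    (IsUniform (quotNatRel E G) ∧
     ker (quotNatRel E G) = G ∧
     coker (quotNatRel E G) = quotRel E G) ∧
    (IsForwardBisim MA MA E →
      ((IsForwardBisim MA MA G ↔
          IsForwardBisim (factorAut MA E) (factorAut MA E) (quotRel E G)) ∧
       ((IsFuzzyEquiv G ∧ IsForwardBisim MA MA G ∧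
           ∀ R : A → A → L, IsFuzzyEquiv R → IsForwardBisim MA MA R → R ≤ G) ↔
        (IsFuzzyEquiv (quotRel E G) ∧
           IsForwardBisim (factorAut MA E) (factorAut MA E) (quotRel E G) ∧
           ∀ R : FactorSet E → FactorSet E → L, IsFuzzyEquiv R →
             IsForwardBisim (factorAut MA E) (factorAut MA E) R → R ≤ quotRel E G)) ∧
       (IsForwardBisim MA MA G ↔
          IsForwardBisim MA (factorAut MA E) (quotNatRel E G)))) := by
  refine ⟨⟨quotRel_tc hE hG hEG, quotRel_equiv hG, partA_iso MA hE hG hEG⟩,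
    partB hE hG hEG, ?_⟩
  intro hEb
  have hQ : IsFuzzyEquiv (quotRel E G) := quotRel_equiv hG
  obtain ⟨hEδ, hEτ⟩ := (bisim_iff MA hE).mp hEb
  refine ⟨partC MA hE hG hEG hEb, ?_, partE MA hE hG hEG⟩
  constructor
  · rintro ⟨-, hGb, hGmax⟩
    refine ⟨hQ, (partC MA hE hG hEG hEb).mp hGb, ?_⟩
    intro R hRe hRb
    obtain ⟨hC1, hC2⟩ := Rsharp_claims MA hE hEb hRe hRb
    set T : A → A → L := fun a b => E a b ⊔ R (toClass E a) (toClass E b) with hT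
    have hTrefl : ∀ a, T a a = 1 := fun a => by
      show E a a ⊔ R (toClass E a) (toClass E a) = 1
      rw [hE.refl]
      exact eq_one_of_one_le le_sup_left
    have hTsymm : ∀ a b, T a b = T b a := fun a b => by
      show E a b ⊔ R (toClass E a) (toClass E b) = E b a ⊔ R (toClass E b) (toClass E a)
      rw [hE.symm a b, hRe.symm (toClass E a) (toClass E b)]
    have hETT : E ≤ rcomp T T := fun a b =>
      le_trans (show E a b ≤ T a b from le_sup_left) (le_rcomp_right hTrefl T a b)
    have hRsubTT : rcomp E (fun a b => R (toClass E a) (toClass E b)) ≤ rcomp T T :=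
      rcomp_mono (fun a b => le_sup_left) (fun a b => le_sup_right)
    have hTδ : ∀ x, rcomp T (MA.δx x) ≤ rcomp (MA.δx x) (rcomp T T) := by
      intro x a b
      show (⨆ c, (E a c ⊔ R (toClass E a) (toClass E c)) * MA.δx x c b)
          ≤ rcomp (MA.δx x) (rcomp T T) a b
      calc (⨆ c, (E a c ⊔ R (toClass E a) (toClass E c)) * MA.δx x c b)
          = ⨆ c, (E a c * MA.δx x c b ⊔ R (toClass E a) (toClass E c) * MA.δx x c b) :=
            iSup_congr fun c => sup_mul' _ _ _
        _ = (⨆ c, E a c * MA.δx x c b) ⊔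
              ⨆ c, R (toClass E a) (toClass E c) * MA.δx x c b := iSup_sup_eq
        _ ≤ rcomp (MA.δx x) (rcomp T T) a b := sup_le
            (le_trans (hEδ x a b) (rcomp_mono le_rfl hETT a b))
            (le_trans (hC1 x a b) (rcomp_mono le_rfl hRsubTT a b))
    have hTτ : rscomp T MA.τ ≤ MA.τ := by
      intro a
      show (⨆ b, (E a b ⊔ R (toClass E a) (toClass E b)) * MA.τ b) ≤ MA.τ a
      calc (⨆ b, (E a b ⊔ R (toClass E a) (toClass E b)) * MA.τ b)
          = ⨆ b, (E a b * MA.τ b ⊔ R (toClass E a) (toClass E b) * MA.τ b) :=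
            iSup_congr fun b => sup_mul' _ _ _
        _ = (⨆ b, E a b * MA.τ b) ⊔ ⨆ b, R (toClass E a) (toClass E b) * MA.τ b :=
            iSup_sup_eq
        _ ≤ MA.τ a := sup_le (hEτ a) (hC2 a)
    obtain ⟨S, hSe, hSb, hTS⟩ := closure MA T hTrefl hTsymm hTδ hTτ
    have hSG : S ≤ G := hGmax S hSe hSb
    intro c c'
    have hcc : R c c' = R (toClass E (rep c)) (toClass E (rep c')) := by
      rw [toClass_rep, toClass_rep]
    rw [hcc]
    show R (toClass E (rep c)) (toClass E (rep c')) ≤ G (rep c) (rep c')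
    calc R (toClass E (rep c)) (toClass E (rep c'))
        ≤ T (rep c) (rep c') := le_sup_right
      _ ≤ S (rep c) (rep c') := hTS _ _
      _ ≤ G (rep c) (rep c') := hSG _ _
  · rintro ⟨-, hQb, hQmax⟩
    refine ⟨hG, (partC MA hE hG hEG hEb).mpr hQb, ?_⟩
    intro R hRe hRb
    obtain ⟨hRδ, hRτ⟩ := (bisim_iff MA hRe).mp hRb
    set T : A → A → L := fun a b => E a b ⊔ R a b with hT
    have hTrefl : ∀ a, T a a = 1 := fun a => by
      show E a a ⊔ R a a = 1
      rw [hE.refl]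
      exact eq_one_of_one_le le_sup_left
    have hTsymm : ∀ a b, T a b = T b a := fun a b => by
      show E a b ⊔ R a b = E b a ⊔ R b a
      rw [hE.symm a b, hRe.symm a b]
    have hETT : E ≤ rcomp T T := fun a b =>
      le_trans (show E a b ≤ T a b from le_sup_left) (le_rcomp_right hTrefl T a b)
    have hRTT : R ≤ rcomp T T := fun a b =>
      le_trans (show R a b ≤ T a b from le_sup_right) (le_rcomp_right hTrefl T a b)
    have hTδ : ∀ x, rcomp T (MA.δx x) ≤ rcomp (MA.δx x) (rcomp T T) := by
      intro x a b
      show (⨆ c, (E a c ⊔ R a c) * MA.δx x c b) ≤ rcomp (MA.δx x) (rcomp T T) a b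
      calc (⨆ c, (E a c ⊔ R a c) * MA.δx x c b)
          = ⨆ c, (E a c * MA.δx x c b ⊔ R a c * MA.δx x c b) :=
            iSup_congr fun c => sup_mul' _ _ _
        _ = (⨆ c, E a c * MA.δx x c b) ⊔ ⨆ c, R a c * MA.δx x c b := iSup_sup_eq
        _ ≤ rcomp (MA.δx x) (rcomp T T) a b := sup_le
            (le_trans (hEδ x a b) (rcomp_mono le_rfl hETT a b))
            (le_trans (hRδ x a b) (rcomp_mono le_rfl hRTT a b))
    have hTτ : rscomp T MA.τ ≤ MA.τ := by
      intro a
      show (⨆ b, (E a b ⊔ R a b) * MA.τ b) ≤ MA.τ a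
      calc (⨆ b, (E a b ⊔ R a b) * MA.τ b)
          = ⨆ b, (E a b * MA.τ b ⊔ R a b * MA.τ b) :=
            iSup_congr fun b => sup_mul' _ _ _
        _ = (⨆ b, E a b * MA.τ b) ⊔ ⨆ b, R a b * MA.τ b := iSup_sup_eq
        _ ≤ MA.τ a := sup_le (hEτ a) (hRτ a)
    obtain ⟨S, hSe, hSb, hTS⟩ := closure MA T hTrefl hTsymm hTδ hTτ
    have hES : E ≤ S := fun a b =>
      le_trans (show E a b ≤ T a b from le_sup_left) (hTS a b)
    have hQS : IsForwardBisim (factorAut MA E) (factorAut MA E) (quotRel E S) :=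
      (partC MA hE hSe hES hEb).mp hSb
    have hle : quotRel E S ≤ quotRel E G := hQmax (quotRel E S) (quotRel_equiv hSe) hQS
    intro a b
    have h1 : R a b ≤ S a b :=
      le_trans (show R a b ≤ T a b from le_sup_right) (hTS a b)
    have h2 : S a b = S (rep (toClass E a)) (rep (toClass E b)) := by
      rw [congrFun (rep_tc_eqL hE hSe hES a) (rep (toClass E b)),
        rep_tc_eqR hE hSe hES b a]
    have h3 := hle (toClass E a) (toClass E b)
    have h4 : G (rep (toClass E a)) (rep (toClass E b)) = G a b := by
      rw [congrFun (rep_tc_eqL hE hG hEG a) (rep (toClass E b)),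
        rep_tc_eqR hE hG hEG b a]
    calc R a b ≤ S a b := h1
      _ = S (rep (toClass E a)) (rep (toClass E b)) := h2
      _ ≤ G (rep (toClass E a)) (rep (toClass E b)) := h3
      _ = G a b := h4

end FuzzyAutomataBisim
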